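/- Fix β ∈ ℝ^p and m > 0, and suppose that |β·(X_i − X_j)| ≥ m for every ordered pair i ≠ j with Δ_j·1[Y_i > Y_j] = 1. Then for every σ > 0, the smoothing error satisfies |𝓛̂_σ(β) − Ĥ(β)| ≤ exp(−m/σ). -/

import Mathlib

open Finset

/-- The smoothed indicator `S_σ(x) = 1 / (1 + exp (-x/σ))`. -/
noncomputable def smoothInd (σ x : ℝ) : ℝ := 1 / (1 + Real.exp (-x / σ))

/-- Euclidean inner product on `ℝ^p`. -/
noncomputable def dotP {p : ℕ} (β x : Fin p → ℝ) : ℝ := ∑ k, β k * x k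

/-- The partial-rank objective
`Ĥ(β) = (1/(n(n−1))) Σ_{i≠j} Δ_j·1[Y_i > Y_j]·1[β·X_i > β·X_j]`. -/
noncomputable def prObj {n p : ℕ} (Y Δ : Fin n → ℝ) (X : Fin n → Fin p → ℝ)
    (β : Fin p → ℝ) : ℝ :=
  (1 / ((n : ℝ) * ((n : ℝ) - 1))) *
    ∑ q ∈ (Finset.univ : Finset (Fin n)).offDiag,
      Δ q.2 * (if Y q.1 > Y q.2 then (1 : ℝ) else 0) *
        (if dotP β (X q.1) > dotP β (X q.2) then (1 : ℝ) else 0)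

/-- The smoothed partial-rank objective
`𝓛̂_σ(β) = (1/(n(n−1))) Σ_{i≠j} Δ_j·1[Y_i > Y_j]·S_σ(β·(X_i − X_j))`. -/
noncomputable def sprObj {n p : ℕ} (σ : ℝ) (Y Δ : Fin n → ℝ) (X : Fin n → Fin p → ℝ)
    (β : Fin p → ℝ) : ℝ :=
  (1 / ((n : ℝ) * ((n : ℝ) - 1))) *
    ∑ q ∈ (Finset.univ : Finset (Fin n)).offDiag,
      Δ q.2 * (if Y q.1 > Y q.2 then (1 : ℝ) else 0) *
        smoothInd σ (dotP β (X q.1 - X q.2))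

lemma dotP_sub {p : ℕ} (β x y : Fin p → ℝ) :
    dotP β (x - y) = dotP β x - dotP β y := by
  simp only [dotP, Pi.sub_apply, mul_sub, Finset.sum_sub_distrib]

/-- For `d > 0` the error is `e / (1 + e) ≤ e` with `e = exp (-d/σ)`; for `d ≤ 0` it is
`1 / (1 + e) ≤ 1 / e`. -/
lemma abs_smoothInd_sub_indicator_le (σ d : ℝ) :
    |smoothInd σ d - (if 0 < d then 1 else 0)| ≤ Real.exp (-|d| / σ) := by
  have he : 0 < Real.exp (-d / σ) := Real.exp_pos _
  rcases lt_or_ge 0 d with hd | hd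
  · have hS : smoothInd σ d - 1 = -(Real.exp (-d / σ) / (1 + Real.exp (-d / σ))) := by
      unfold smoothInd; field_simp; ring
    rw [if_pos hd, hS, abs_neg, abs_of_pos (by positivity), abs_of_pos hd]
    exact div_le_self he.le (by linarith)
  · have hS : 0 < smoothInd σ d := by unfold smoothInd; positivity
    rw [if_neg hd.not_gt, sub_zero, abs_of_pos hS, abs_of_nonpos hd, neg_neg,
      show d / σ = -(-d / σ) by ring, Real.exp_neg, smoothInd, one_div]
    exact inv_anti₀ he (by linarith)

lemma abs_inv_card_mul_sum_le {ι : Type*} {s : Finset ι} {f : ι → ℝ} {E : ℝ} (hE : 0 ≤ E)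
    (hf : ∀ q ∈ s, |f q| ≤ E) :
    |1 / (#s : ℝ) * ∑ q ∈ s, f q| ≤ E := by
  rcases s.eq_empty_or_nonempty with rfl | hs
  · simpa using hE
  have hcard : (0 : ℝ) < #s := by exact_mod_cast hs.card_pos
  rw [abs_mul, abs_of_pos (by positivity), one_div, inv_mul_le_iff₀ hcard]
  calc |∑ q ∈ s, f q| ≤ ∑ q ∈ s, |f q| := abs_sum_le_sum_abs _ _
    _ ≤ #s * E := by simpa using sum_le_card_nsmul s _ E hf

lemma card_offDiag_univ_fin (n : ℕ) :
    (#(univ : Finset (Fin n)).offDiag : ℝ) = n * (n - 1) := by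
  rw [offDiag_card, card_univ, Fintype.card_fin, Nat.cast_sub (Nat.le_mul_self n)]
  push_cast
  ring

lemma sprObj_sub_prObj {n p : ℕ} (σ : ℝ) (Y Δ : Fin n → ℝ) (X : Fin n → Fin p → ℝ)
    (β : Fin p → ℝ) :
    sprObj σ Y Δ X β - prObj Y Δ X β =
      1 / (#(univ : Finset (Fin n)).offDiag : ℝ) *
        ∑ q ∈ (univ : Finset (Fin n)).offDiag,
          Δ q.2 * (if Y q.1 > Y q.2 then 1 else 0) *
            (smoothInd σ (dotP β (X q.1 - X q.2)) -
              if 0 < dotP β (X q.1 - X q.2) then 1 else 0) := by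
  simp only [sprObj, prObj, card_offDiag_univ_fin, ← mul_sub, ← sum_sub_distrib, dotP_sub,
    sub_pos, gt_iff_lt]

theorem sprObj_error_bound_general {n p : ℕ}
    (Y Δ : Fin n → ℝ) (X : Fin n → Fin p → ℝ)
    (hΔ : ∀ i, Δ i = 0 ∨ Δ i = 1) (β : Fin p → ℝ)
    (m : ℝ)
    (hmargin : ∀ i j : Fin n, i ≠ j →
      Δ j * (if Y i > Y j then (1 : ℝ) else 0) = 1 →
      m ≤ |dotP β (X i - X j)|)
    (σ : ℝ) (hσ : 0 < σ) :
    |sprObj σ Y Δ X β - prObj Y Δ X β| ≤ Real.exp (-m / σ) := by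
  rw [sprObj_sub_prObj]
  refine abs_inv_card_mul_sum_le (Real.exp_pos _).le fun q hq => ?_
  have hne : q.1 ≠ q.2 := (mem_offDiag.1 hq).2.2
  have hweight : Δ q.2 * (if Y q.1 > Y q.2 then (1 : ℝ) else 0) = 0 ∨
      Δ q.2 * (if Y q.1 > Y q.2 then (1 : ℝ) else 0) = 1 := by
    rcases hΔ q.2 with h | h <;> split_ifs <;> simp [h]
  rcases hweight with h | h
  · simpa [h] using (Real.exp_pos _).le
  · rw [h, one_mul]
    refine (abs_smoothInd_sub_indicator_le σ _).trans (Real.exp_le_exp.2 ?_)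
    exact div_le_div_of_nonneg_right (neg_le_neg (hmargin _ _ hne h)) hσ.le

/-- If `|β·(X_i − X_j)| ≥ m > 0` for every ordered pair `i ≠ j` with
`Δ_j·1[Y_i > Y_j] = 1`, then for every `σ > 0` the smoothing error satisfies
`|𝓛̂_σ(β) − Ĥ(β)| ≤ exp (−m/σ)`. -/
theorem sprObj_error_bound {n p : ℕ} (hn : 2 ≤ n)
    (Y Δ : Fin n → ℝ) (X : Fin n → Fin p → ℝ)
    (hΔ : ∀ i, Δ i = 0 ∨ Δ i = 1) (β : Fin p → ℝ)
    (m : ℝ) (hm : 0 < m)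
    (hmargin : ∀ i j : Fin n, i ≠ j →
      Δ j * (if Y i > Y j then (1 : ℝ) else 0) = 1 →
      m ≤ |dotP β (X i - X j)|)
    (σ : ℝ) (hσ : 0 < σ) :
    |sprObj σ Y Δ X β - prObj Y Δ X β| ≤ Real.exp (-m / σ) :=
  sprObj_error_bound_general Y Δ X hΔ β m hmargin σ hσ
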